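/- Let S be a pseudo-nilpotent finite semigroup and a, b ∈ S. If there is an edge in the upper non-nilpotent graph N_S between a and b (i.e., ⟨a, b⟩ is not Mal'cev nilpotent), then there exists a stem S^{(i)} of S containing both a and b. -/

import Mathlib

/-- One multiplication step `a · w · b` where `w` ranges over `S¹`
(`none` playing the role of the adjoined identity). -/
def mulW {S : Type*} [Semigroup S] (a : S) (w : Option S) (b : S) : S :=
  match w with
  | none => a * b
  | some c => a * c * b

/-- The Mal'cev sequences: `(malcev x y w n).1 = λ_n` and `(malcev x y w n).2 = ρ_n`,
with `λ_0 = x`, `ρ_0 = y`, `λ_{n+1} = λ_n w_{n+1} ρ_n`, `ρ_{n+1} = ρ_n w_{n+1} λ_n`. -/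
def malcev {S : Type*} [Semigroup S] (x y : S) (w : ℕ → Option S) : ℕ → S × S
  | 0 => (x, y)
  | n + 1 =>
      let p := malcev x y w n
      (mulW p.1 (w n) p.2, mulW p.2 (w n) p.1)

/-- Mal'cev nilpotency of a (multiplicatively closed) subset `A` of `S`,
computed with parameters from `A¹`. -/
def SetMN {S : Type*} [Semigroup S] (A : Set S) : Prop :=
  ∃ n : ℕ, 0 < n ∧ ∀ x ∈ A, ∀ y ∈ A, ∀ w : ℕ → Option S,
    (∀ k c, w k = some c → c ∈ A) →
    (malcev x y w n).1 = (malcev x y w n).2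

/-- A semigroup is Mal'cev nilpotent. -/
def IsMN (S : Type*) [Semigroup S] : Prop := SetMN (Set.univ : Set S)

/-- Equality in the Rees quotient by (the possibly empty ideal) `I`. -/
def ReesEq {S : Type*} [Semigroup S] (I : Set S) (a b : S) : Prop :=
  a = b ∨ (a ∈ I ∧ b ∈ I)

/-- Mal'cev nilpotency of the Rees quotient `A / I` (computed by lifting to `A`). -/
def SetMNMod {S : Type*} [Semigroup S] (I A : Set S) : Prop :=
  ∃ n : ℕ, 0 < n ∧ ∀ x ∈ A, ∀ y ∈ A, ∀ w : ℕ → Option S,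
    (∀ k c, w k = some c → c ∈ A) →
    ReesEq I (malcev x y w n).1 (malcev x y w n).2

/-- `I` is an ideal of (the mul-closed subset) `T`; the empty set counts as an ideal. -/
def IsIdealIn {S : Type*} [Semigroup S] (T I : Set S) : Prop :=
  I ⊆ T ∧ ∀ a ∈ I, ∀ t ∈ T, t * a ∈ I ∧ a * t ∈ I

/-- Edge of the upper non-nilpotent graph `N_S`: `⟨a,b⟩` is not Mal'cev nilpotent. -/
def NEdge {S : Type*} [Semigroup S] (a b : S) : Prop :=
  a ≠ b ∧ ¬ SetMN (Subsemigroup.closure ({a, b} : Set S) : Set S)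

/-- The generating set of the subsemigroup `⟨x, y, w_1, …, w_m⟩`. -/
def genSet {S : Type*} [Semigroup S] (x y : S) (w : ℕ → Option S) (m : ℕ) : Set S :=
  {x, y} ∪ {c | ∃ k, k < m ∧ w k = some c}

/-- A pseudo-nilpotent semigroup. -/
def IsPN (S : Type*) [Semigroup S] : Prop :=
  ∀ (x y : S) (w : ℕ → Option S) (m : ℕ) (I : Set S),
    IsIdealIn (Subsemigroup.closure (genSet x y w m) : Set S) I →
    (malcev x y w m).1 ∉ I → (malcev x y w m).2 ∉ I →
    (∃ t, t < m ∧ (malcev x y w t).1 ≠ (malcev x y w t).2 ∧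
      malcev x y w t = malcev x y w m) →
    ∀ i ≤ m, ¬ SetMNMod I
      (Subsemigroup.closure ({(malcev x y w i).1, (malcev x y w i).2} : Set S) : Set S)

/-- A principal series `S = S_1 ⊃ S_2 ⊃ ⋯ ⊃ S_m ⊃ S_{m+1} = ∅` of a semigroup:
a strictly decreasing chain of ideals with no ideal strictly between consecutive
terms (the empty set counts as an ideal). -/
structure PrincipalSeries (S : Type*) [Semigroup S] where
  m : ℕ
  C : ℕ → Set S
  first : C 1 = Set.univ
  last : C (m + 1) = ∅
  ideal : ∀ i, 1 ≤ i → i ≤ m → IsIdealIn Set.univ (C i)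
  ssub : ∀ i, 1 ≤ i → i ≤ m → C (i + 1) ⊂ C i
  maximal : ∀ i, 1 ≤ i → i ≤ m → ∀ I : Set S, IsIdealIn Set.univ I →
    C (i + 1) ⊆ I → I ⊆ C i → I = C (i + 1) ∨ I = C i

variable {S : Type*} [Semigroup S]

/-- `F_{S_j/S_{j+1}}(S/S_{j+1})`, computed in `S`:  the elements `s ∉ S_j` with
`s·a ≠ θ` or `a·s ≠ θ` in `S/S_{j+1}` for some `a` in the ideal `S_j/S_{j+1}`. -/
def FsetQ (ps : PrincipalSeries S) (j : ℕ) : Set S :=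
  {s | s ∉ ps.C j ∧ ∃ a ∈ ps.C j, s * a ∉ ps.C (j + 1) ∨ a * s ∉ ps.C (j + 1)}

/-- `S_i \ S_{i+1}` is a root: the principal factor `S_i/S_{i+1}` is not Mal'cev
nilpotent and there is no `N_S`-edge between `S_i \ S_{i+1}` and `S_{i+1}`. -/
def Root (ps : PrincipalSeries S) (i : ℕ) : Prop :=
  ¬ SetMNMod (ps.C (i + 1)) (ps.C i) ∧
  ∀ a ∈ ps.C i \ ps.C (i + 1), ∀ b ∈ ps.C (i + 1), ¬ NEdge a b

/-- `S_i \ S_{i+1}` is an isolated subset: it is not a root, and whenever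
`S_i \ S_{i+1} ⊆ F_{S_j/S_{j+1}}(S/S_{j+1})` the factor `S_j/S_{j+1}` is nilpotent. -/
def Isolated (ps : PrincipalSeries S) (i : ℕ) : Prop :=
  ¬ Root ps i ∧
  ∀ j, 1 ≤ j → j ≤ ps.m → ps.C i \ ps.C (i + 1) ⊆ FsetQ ps j →
    SetMNMod (ps.C (j + 1)) (ps.C j)

/-- `K`, the union of all isolated subsets `S_i \ S_{i+1}`. -/
def Kset (ps : PrincipalSeries S) : Set S :=
  {a | ∃ i, 1 ≤ i ∧ i ≤ ps.m ∧ Isolated ps i ∧ a ∈ ps.C i \ ps.C (i + 1)}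

/-- The stem `S^{(i)} = F_{S_i/S_{i+1}}(S/S_{i+1}) ∪ (S_i \ S_{i+1})` of a root. -/
def Stem (ps : PrincipalSeries S) (i : ℕ) : Set S :=
  FsetQ ps i ∪ (ps.C i \ ps.C (i + 1))

/-! An edge `a — b` of `N_S` yields, by finiteness, a Mal'cev sequence of `⟨a, b⟩` that runs
into a cycle without collapsing. Pseudo-nilpotency forces the cycle into a principal factor
`S_i/S_{i+1}` that is not nilpotent, and the elements of the cycle have both `a` and `b` as
factors (otherwise the pair generating the sequence would lie in a cyclic, hence commutative,
subsemigroup). If `S_i \ S_{i+1}` is a root, `a` and `b` lie in its stem: a factor of an element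
of a non-null `0`-simple layer either lies in that layer or multiplies into it non-trivially.
Otherwise some edge joins `S_i \ S_{i+1}` to `S_{i+1}`; its cycle lies in a strictly deeper
factor whose elements are still divisible by `a` and `b`, and we descend. -/

def principalIdeal (x : S) : Set S :=
  {s | ∃ u v : WithOne S, (s : WithOne S) = u * x * v}

theorem mem_principalIdeal_self (x : S) : x ∈ principalIdeal x := ⟨1, 1, by simp⟩

theorem principalIdeal_subset_of_mem {x y : S} (hy : y ∈ principalIdeal x) :
    principalIdeal y ⊆ principalIdeal x := by
  rintro s ⟨u', v', hs⟩
  obtain ⟨u, v, hy⟩ := hy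
  exact ⟨u' * u, v * v', by rw [hs, hy]; simp only [mul_assoc]⟩

theorem isIdealIn_principalIdeal (x : S) : IsIdealIn Set.univ (principalIdeal x) :=
  ⟨Set.subset_univ _, fun s ⟨u, v, hs⟩ t _ =>
    ⟨⟨t * u, v, by rw [WithOne.coe_mul, hs]; simp only [mul_assoc]⟩,
      ⟨u, v * t, by rw [WithOne.coe_mul, hs]; simp only [mul_assoc]⟩⟩⟩

theorem mulW_mem_principalIdeal_left (a : S) (w : Option S) (b : S) :
    mulW a w b ∈ principalIdeal a := by
  cases w with
  | none => exact ⟨1, b, by simp [mulW]⟩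
  | some c => exact ⟨1, ↑(c * b), by simp [mulW, mul_assoc]⟩

theorem mulW_mem_principalIdeal_right (a : S) (w : Option S) (b : S) :
    mulW a w b ∈ principalIdeal b := by
  cases w with
  | none => exact ⟨a, 1, by simp [mulW]⟩
  | some c => exact ⟨↑(a * c), 1, by simp [mulW]⟩

namespace IsIdealIn

variable {I J : Set S}

theorem exists_coe_eq_mul (hI : IsIdealIn Set.univ I) {s : S} (hs : s ∈ I) (u : WithOne S) :
    ∃ t ∈ I, (t : WithOne S) = u * s := by
  refine WithOne.cases_on u ⟨s, hs, (one_mul _).symm⟩ fun a => ?_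
  exact ⟨a * s, (hI.2 s hs a trivial).1, WithOne.coe_mul a s⟩

theorem exists_coe_eq_mul_right (hI : IsIdealIn Set.univ I) {s : S} (hs : s ∈ I)
    (u : WithOne S) : ∃ t ∈ I, (t : WithOne S) = s * u := by
  refine WithOne.cases_on u ⟨s, hs, (mul_one _).symm⟩ fun a => ?_
  exact ⟨s * a, (hI.2 s hs a trivial).2, WithOne.coe_mul s a⟩

theorem principalIdeal_subset (hI : IsIdealIn Set.univ I) {x : S} (hx : x ∈ I) :
    principalIdeal x ⊆ I := by
  rintro s ⟨u, v, hs⟩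
  obtain ⟨t, ht, hut⟩ := hI.exists_coe_eq_mul hx u
  obtain ⟨t', ht', htv⟩ := hI.exists_coe_eq_mul_right ht v
  rw [← hut, ← htv, WithOne.coe_inj] at hs
  exact hs ▸ ht'

theorem mulW_mem (hI : IsIdealIn Set.univ I) {a b : S} (w : Option S) (h : a ∈ I ∨ b ∈ I) :
    mulW a w b ∈ I :=
  h.elim (fun ha => hI.principalIdeal_subset ha (mulW_mem_principalIdeal_left a w b))
    (fun hb => hI.principalIdeal_subset hb (mulW_mem_principalIdeal_right a w b))

theorem union (hI : IsIdealIn Set.univ I) (hJ : IsIdealIn Set.univ J) :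
    IsIdealIn Set.univ (I ∪ J) :=
  ⟨Set.subset_univ _, fun a ha t _ => ha.elim
    (fun ha => ⟨.inl (hI.2 a ha t trivial).1, .inl (hI.2 a ha t trivial).2⟩)
    (fun ha => ⟨.inr (hJ.2 a ha t trivial).1, .inr (hJ.2 a ha t trivial).2⟩)⟩

theorem inter_subsemigroup (hI : IsIdealIn Set.univ I) (K : Subsemigroup S) :
    IsIdealIn (K : Set S) (I ∩ K) :=
  ⟨Set.inter_subset_right, fun a ha t ht =>
    ⟨⟨(hI.2 a ha.1 t trivial).1, mul_mem ht ha.2⟩, ⟨(hI.2 a ha.1 t trivial).2, mul_mem ha.2 ht⟩⟩⟩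

theorem closure_subset (hI : IsIdealIn Set.univ I) {s : Set S} (hs : s ⊆ I) :
    (Subsemigroup.closure s : Set S) ⊆ I := fun _ hx => by
  induction hx using Subsemigroup.closure_induction with
  | mem x hx => exact hs hx
  | mul a b _ _ _ hb => exact (hI.2 b hb a trivial).1

end IsIdealIn

theorem exists_mul_notMem_of_mem_principalIdeal {I J : Set S} (hI : IsIdealIn Set.univ I)
    (hJ : IsIdealIn Set.univ J) {a g c : S} (hc : c ∈ J) (hgc : g * c ∉ I)
    (ha : g ∈ principalIdeal a) : ∃ c' ∈ J, a * c' ∉ I := by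
  obtain ⟨u, v, hg⟩ := ha
  obtain ⟨c', hc', hvc⟩ := hJ.exists_coe_eq_mul hc v
  refine ⟨c', hc', fun h => hgc (hI.principalIdeal_subset h ⟨u, 1, ?_⟩)⟩
  rw [WithOne.coe_mul, hg, WithOne.coe_mul, hvc]
  simp only [mul_one, mul_assoc]

section Malcev

variable {x y : S} {w : ℕ → Option S}

theorem malcev_succ_fst (n : ℕ) :
    (malcev x y w (n + 1)).1 = mulW (malcev x y w n).1 (w n) (malcev x y w n).2 := rfl

theorem malcev_succ_snd (n : ℕ) :
    (malcev x y w (n + 1)).2 = mulW (malcev x y w n).2 (w n) (malcev x y w n).1 := rfl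

theorem malcev_eq_of_le {n k : ℕ} (h : (malcev x y w n).1 = (malcev x y w n).2) (hnk : n ≤ k) :
    (malcev x y w k).1 = (malcev x y w k).2 := by
  induction k, hnk using Nat.le_induction with
  | base => exact h
  | succ k _ ih => rw [malcev_succ_fst, malcev_succ_snd, ih]

theorem malcev_mem_of_lt {I : Set S} (hI : IsIdealIn Set.univ I) {n k : ℕ}
    (h : (malcev x y w n).1 ∈ I ∨ (malcev x y w n).2 ∈ I) (hnk : n < k) :
    (malcev x y w k).1 ∈ I ∧ (malcev x y w k).2 ∈ I := by
  induction k, hnk using Nat.le_induction with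
  | base => exact ⟨hI.mulW_mem _ h, hI.mulW_mem _ h.symm⟩
  | succ k _ ih => exact ⟨hI.mulW_mem _ (.inl ih.1), hI.mulW_mem _ (.inl ih.2)⟩

theorem malcev_fst_mem_iff_of_cycle {I : Set S} (hI : IsIdealIn Set.univ I) {t M : ℕ}
    (htM : t < M) (hcyc : malcev x y w t = malcev x y w M) :
    (malcev x y w M).1 ∈ I ↔ (malcev x y w M).2 ∈ I := by
  rw [← hcyc]
  constructor <;> intro h
  · simpa [hcyc] using (malcev_mem_of_lt hI (.inl h) htM).2
  · simpa [hcyc] using (malcev_mem_of_lt hI (.inr h) htM).1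

theorem malcev_fst_mem_principalIdeal {n : ℕ} (hn : 0 < n) :
    (malcev x y w n).1 ∈ principalIdeal x ∧ (malcev x y w n).1 ∈ principalIdeal y :=
  ⟨(malcev_mem_of_lt (n := 0) (isIdealIn_principalIdeal x)
      (.inl (mem_principalIdeal_self x)) hn).1,
    (malcev_mem_of_lt (n := 0) (isIdealIn_principalIdeal y)
      (.inr (mem_principalIdeal_self y)) hn).1⟩

theorem malcev_mem_subsemigroup {K : Subsemigroup S} (hx : x ∈ K) (hy : y ∈ K) {n : ℕ}
    (hw : ∀ k < n, ∀ c, w k = some c → c ∈ K) :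
    (malcev x y w n).1 ∈ K ∧ (malcev x y w n).2 ∈ K := by
  induction n with
  | zero => exact ⟨hx, hy⟩
  | succ n ih =>
    have hmulW : ∀ a ∈ K, ∀ b ∈ K, mulW a (w n) b ∈ K := by
      intro a ha b hb
      cases hwn : w n with
      | none => exact mul_mem ha hb
      | some c => exact mul_mem (mul_mem ha (hw n n.lt_succ_self c hwn)) hb
    obtain ⟨h1, h2⟩ := ih fun k hk => hw k (by omega)
    exact ⟨hmulW _ h1 _ h2, hmulW _ h2 _ h1⟩

theorem exists_malcev_cycle [Finite S] {A : Set S} (h : ¬ SetMN A) :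
    ∃ x ∈ A, ∃ y ∈ A, ∃ w : ℕ → Option S, (∀ k c, w k = some c → c ∈ A) ∧
      ∃ t M, t < M ∧ (malcev x y w t).1 ≠ (malcev x y w t).2 ∧
        malcev x y w t = malcev x y w M := by
  unfold SetMN at h
  push Not at h
  obtain ⟨x, hx, y, hy, w, hw, hN⟩ := h (Nat.card (S × S) + 1) (Nat.succ_pos _)
  have hinj : ¬ Function.Injective fun n : Fin (Nat.card (S × S) + 1) => malcev x y w n :=
    fun hinj => by simpa using Nat.card_le_card_of_injective _ hinj
  obtain ⟨i, j, hij, hne⟩ := Function.not_injective_iff.1 hinj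
  wlog hlt : i < j generalizing i j
  · exact this j i hij.symm hne.symm (lt_of_le_of_ne (not_lt.1 hlt) hne.symm)
  exact ⟨x, hx, y, hy, w, hw, i, j, hlt, fun he => hN (malcev_eq_of_le he (by omega)), hij⟩

end Malcev

theorem setMNMod_of_mul_comm {I A : Set S} (h : ∀ a ∈ A, ∀ b ∈ A, a * b = b * a) :
    SetMNMod I A := by
  refine ⟨1, one_pos, fun a ha b hb w hw => .inl ?_⟩
  show mulW a (w 0) b = mulW b (w 0) a
  cases hw0 : w 0 with
  | none => exact h a ha b hb
  | some c =>
    have hc := hw 0 c hw0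
    show a * c * b = b * c * a
    rw [h a ha c hc, mul_assoc, h a ha b hb, ← mul_assoc, h c hc b hb]

theorem exists_mul_notMem_of_not_setMNMod {I A : Set S} (hA : ∀ a ∈ A, ∀ b ∈ A, a * b ∈ A)
    (h : ¬ SetMNMod I A) : ∃ a ∈ A, ∃ c ∈ A, a * c ∉ I := by
  by_contra! hnull
  refine h ⟨1, one_pos, fun a ha b hb w hw => .inr ?_⟩
  show mulW a (w 0) b ∈ I ∧ mulW b (w 0) a ∈ I
  cases hw0 : w 0 with
  | none => exact ⟨hnull a ha b hb, hnull b hb a ha⟩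
  | some c =>
    have hc := hw 0 c hw0
    simp only [mulW, mul_assoc]
    exact ⟨hnull a ha _ (hA c hc b hb), hnull b hb _ (hA c hc a ha)⟩

theorem SetMNMod.inter_of_subset {I A B : Set S} (h : SetMNMod I A) (hBA : B ⊆ A)
    (K : Subsemigroup S) (hBK : B ⊆ K) : SetMNMod (I ∩ K) B := by
  obtain ⟨n, hn, hA⟩ := h
  refine ⟨n, hn, fun x hx y hy w hw => ?_⟩
  have hK := malcev_mem_subsemigroup (hBK hx) (hBK hy) (n := n) fun k _ c hc => hBK (hw k c hc)
  exact (hA x (hBA hx) y (hBA hy) w fun k c hc => hBA (hw k c hc)).imp_right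
    fun h => ⟨⟨h.1, hK.1⟩, ⟨h.2, hK.2⟩⟩

theorem mem_closure_singleton_or_mem_principalIdeal {p q s : S}
    (hs : s ∈ Subsemigroup.closure ({p, q} : Set S)) :
    s ∈ Subsemigroup.closure ({p} : Set S) ∨ s ∈ principalIdeal q := by
  have hq := isIdealIn_principalIdeal q
  induction hs using Subsemigroup.closure_induction with
  | mem s hs =>
    rcases hs with rfl | rfl
    · exact .inl (Subsemigroup.subset_closure rfl)
    · exact .inr (mem_principalIdeal_self s)
  | mul a b _ _ ha hb =>
    rcases ha with ha | ha
    · rcases hb with hb | hb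
      · exact .inl (mul_mem ha hb)
      · exact .inr (hq.2 b hb a trivial).1
    · exact .inr (hq.2 a ha b trivial).2

theorem mem_principalIdeal_of_not_setMNMod {I : Set S} {u v x y s : S}
    (hx : x ∈ Subsemigroup.closure ({u, v} : Set S))
    (hy : y ∈ Subsemigroup.closure ({u, v} : Set S))
    (hxy : ¬ SetMNMod I (Subsemigroup.closure ({x, y} : Set S) : Set S))
    (hsx : s ∈ principalIdeal x) (hsy : s ∈ principalIdeal y) : s ∈ principalIdeal v := by
  rcases mem_closure_singleton_or_mem_principalIdeal hx with hx | hx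
  · rcases mem_closure_singleton_or_mem_principalIdeal hy with hy | hy
    · refine absurd (setMNMod_of_mul_comm fun a ha b hb => ?_) hxy
      have hsub : Subsemigroup.closure {x, y} ≤ Subsemigroup.closure {u} :=
        Subsemigroup.closure_le.2 (Set.pair_subset hx hy)
      have := Subsemigroup.isMulCommutative_closure S (s := {u}) (by simp)
      exact setLike_mul_comm (hsub ha) (hsub hb)
    · exact principalIdeal_subset_of_mem hy hsy
  · exact principalIdeal_subset_of_mem hx hsx

namespace PrincipalSeries

variable (ps : PrincipalSeries S) {i j k : ℕ}

theorem isIdealIn (h1 : 1 ≤ j) (h2 : j ≤ ps.m + 1) : IsIdealIn Set.univ (ps.C j) := by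
  rcases h2.lt_or_eq with h2 | rfl
  · exact ps.ideal j h1 (by omega)
  · rw [ps.last]
    exact ⟨Set.empty_subset _, fun a ha => ha.elim⟩

theorem C_subset_C (h1 : 1 ≤ j) (hjk : j ≤ k) (hk : k ≤ ps.m + 1) : ps.C k ⊆ ps.C j := by
  induction k, hjk using Nat.le_induction with
  | base => exact subset_rfl
  | succ k _ ih => exact (ps.ssub k (by omega) (by omega)).subset.trans (ih (by omega))

theorem exists_mem_layer (s : S) : ∃ i, 1 ≤ i ∧ i ≤ ps.m ∧ s ∈ ps.C i \ ps.C (i + 1) := by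
  by_contra! h
  have hmem : ∀ k, 1 ≤ k → k ≤ ps.m + 1 → s ∈ ps.C k := by
    intro k hk
    induction k, hk using Nat.le_induction with
    | base => exact fun _ => ps.first ▸ Set.mem_univ s
    | succ k hk ih =>
      intro hk'
      by_contra hs
      exact h k hk (by omega) ⟨ih (by omega), hs⟩
  simpa [ps.last] using hmem (ps.m + 1) (by omega) le_rfl

theorem mem_principalIdeal_of_mem_layer (h1 : 1 ≤ i) (h2 : i ≤ ps.m) {s x : S}
    (hs : s ∈ ps.C i \ ps.C (i + 1)) (hx : x ∈ ps.C i \ ps.C (i + 1)) :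
    x ∈ principalIdeal s := by
  have hJ := (ps.isIdealIn (j := i + 1) (by omega) (by omega)).union (isIdealIn_principalIdeal s)
  have hJC : ps.C (i + 1) ∪ principalIdeal s ⊆ ps.C i :=
    Set.union_subset (ps.C_subset_C h1 (by omega) (by omega))
      ((ps.isIdealIn h1 (by omega)).principalIdeal_subset hs.1)
  rcases ps.maximal i h1 h2 _ hJ Set.subset_union_left hJC with h | h
  · have hsJ : s ∈ ps.C (i + 1) ∪ principalIdeal s := .inr (mem_principalIdeal_self s)
    rw [h] at hsJ
    exact absurd hsJ hs.2
  · have hxJ : x ∈ ps.C (i + 1) ∪ principalIdeal s := h ▸ hx.1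
    exact hxJ.resolve_left hx.2

theorem mem_stem (h1 : 1 ≤ i) (h2 : i ≤ ps.m) (hA : ¬ SetMNMod (ps.C (i + 1)) (ps.C i))
    {a g : S} (hg : g ∈ ps.C i \ ps.C (i + 1)) (ha : g ∈ principalIdeal a) :
    a ∈ Stem ps i := by
  have hCi := ps.isIdealIn h1 (by omega)
  have hCi1 := ps.isIdealIn (j := i + 1) (by omega) (by omega)
  by_cases haC : a ∈ ps.C i
  · exact .inr ⟨haC, fun h => hg.2 (hCi1.principalIdeal_subset h ha)⟩
  -- A product `α * c` escapes `S_{i+1}`; such a right factor `c ∈ S_i` passes from `α` to its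
  -- divisor `g` (same layer), and from `g` to its divisor `a`.
  obtain ⟨α, hα, c, hc, hαc⟩ :=
    exists_mul_notMem_of_not_setMNMod (fun a _ b hb => (hCi.2 b hb a trivial).1) hA
  have hαi : α ∈ ps.C i \ ps.C (i + 1) := ⟨hα, fun h => hαc (hCi1.2 α h c trivial).2⟩
  obtain ⟨c₁, hc₁, hgc₁⟩ := exists_mul_notMem_of_mem_principalIdeal hCi1 hCi hc hαc
    (ps.mem_principalIdeal_of_mem_layer h1 h2 hg hαi)
  obtain ⟨c₂, hc₂, hac₂⟩ := exists_mul_notMem_of_mem_principalIdeal hCi1 hCi hc₁ hgc₁ ha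
  exact .inl ⟨haC, c₂, hc₂, .inl hac₂⟩

end PrincipalSeries

theorem not_setMNMod_of_malcev_cycle (hPN : IsPN S) (ps : PrincipalSeries S) {x y : S}
    {w : ℕ → Option S} {t M i : ℕ} (htM : t < M)
    (hne : (malcev x y w t).1 ≠ (malcev x y w t).2) (hcyc : malcev x y w t = malcev x y w M)
    (h1 : 1 ≤ i) (h2 : i ≤ ps.m) (hp : (malcev x y w M).1 ∈ ps.C i \ ps.C (i + 1)) :
    ¬ SetMNMod (ps.C (i + 1)) (ps.C i) := by
  intro hA
  have hCi := ps.isIdealIn h1 (by omega)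
  have hCi1 := ps.isIdealIn (j := i + 1) (by omega) (by omega)
  have hq : (malcev x y w M).2 ∈ ps.C i \ ps.C (i + 1) :=
    ⟨(malcev_fst_mem_iff_of_cycle hCi htM hcyc).1 hp.1,
      fun h => hp.2 ((malcev_fst_mem_iff_of_cycle hCi1 htM hcyc).2 h)⟩
  set T := Subsemigroup.closure (genSet x y w M)
  have hpqT := malcev_mem_subsemigroup (K := T) (Subsemigroup.subset_closure (.inl (.inl rfl)))
    (Subsemigroup.subset_closure (.inl (.inr rfl)))
    fun k hk c hc => Subsemigroup.subset_closure (.inr ⟨k, hk, hc⟩)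
  have hsubC := hCi.closure_subset (Set.pair_subset hp.1 hq.1)
  have hsubT := Subsemigroup.closure_le.2 (Set.pair_subset hpqT.1 hpqT.2)
  exact hPN x y w M (ps.C (i + 1) ∩ T) (hCi1.inter_subsemigroup T) (fun h => hp.2 h.1)
    (fun h => hq.2 h.1) ⟨t, htM, hne, hcyc⟩ M le_rfl (hA.inter_of_subset hsubC T hsubT)

theorem exists_layer_of_nEdge [Finite S] (hPN : IsPN S) (ps : PrincipalSeries S) {u v : S}
    (huv : NEdge u v) :
    ∃ i, 1 ≤ i ∧ i ≤ ps.m ∧ ¬ SetMNMod (ps.C (i + 1)) (ps.C i) ∧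
      ∃ g ∈ ps.C i \ ps.C (i + 1), g ∈ principalIdeal u ∧ g ∈ principalIdeal v := by
  obtain ⟨x, hx, y, hy, w, -, t, M, htM, hne, hcyc⟩ := exists_malcev_cycle huv.2
  obtain ⟨i, h1, h2, hp⟩ := ps.exists_mem_layer (malcev x y w M).1
  have hxy : ¬ SetMNMod ∅ (Subsemigroup.closure ({x, y} : Set S) : Set S) :=
    hPN x y w M ∅ ⟨Set.empty_subset _, fun _ h => h.elim⟩ (Set.notMem_empty _)
      (Set.notMem_empty _) ⟨t, htM, hne, hcyc⟩ 0 (Nat.zero_le M)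
  obtain ⟨hpx, hpy⟩ := malcev_fst_mem_principalIdeal (w := w) (by omega : 0 < M)
  refine ⟨i, h1, h2, not_setMNMod_of_malcev_cycle hPN ps htM hne hcyc h1 h2 hp, _, hp, ?_,
    mem_principalIdeal_of_not_setMNMod hx hy hxy hpx hpy⟩
  rw [Set.pair_comm] at hx hy
  exact mem_principalIdeal_of_not_setMNMod hx hy hxy hpx hpy

theorem PrincipalSeries.exists_root_mem_stem [Finite S] (hPN : IsPN S) (ps : PrincipalSeries S)
    {a b g : S} {i : ℕ} (h1 : 1 ≤ i) (h2 : i ≤ ps.m) (hA : ¬ SetMNMod (ps.C (i + 1)) (ps.C i))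
    (hg : g ∈ ps.C i \ ps.C (i + 1)) (ha : g ∈ principalIdeal a) (hb : g ∈ principalIdeal b) :
    ∃ j, 1 ≤ j ∧ j ≤ ps.m ∧ Root ps j ∧ a ∈ Stem ps j ∧ b ∈ Stem ps j := by
  by_cases hroot : Root ps i
  · exact ⟨i, h1, h2, hroot, ps.mem_stem h1 h2 hA hg ha, ps.mem_stem h1 h2 hA hg hb⟩
  obtain ⟨u, hu, hu', v, hv, huv⟩ :
      ∃ u ∈ ps.C i, u ∉ ps.C (i + 1) ∧ ∃ v ∈ ps.C (i + 1), NEdge u v := by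
    simpa [Root, hA] using hroot
  obtain ⟨i', h1', h2', hA', g', hg', hg'u, hg'v⟩ := exists_layer_of_nEdge hPN ps huv
  have hii' : i < i' := by
    by_contra! hle
    exact hg'.2 (ps.C_subset_C (by omega) (by omega) (by omega)
      ((ps.isIdealIn (by omega) (by omega)).principalIdeal_subset hv hg'v))
  have hg'g : g' ∈ principalIdeal g :=
    principalIdeal_subset_of_mem (ps.mem_principalIdeal_of_mem_layer h1 h2 hg ⟨hu, hu'⟩) hg'u
  exact ps.exists_root_mem_stem hPN h1' h2' hA' hg' (principalIdeal_subset_of_mem ha hg'g)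
    (principalIdeal_subset_of_mem hb hg'g)
termination_by ps.m + 1 - i

theorem stmt16_general {S : Type*} [Semigroup S] [Finite S]
    (hPN : IsPN S) (ps : PrincipalSeries S) (a b : S) (hE : NEdge a b) :
    ∃ i, 1 ≤ i ∧ i ≤ ps.m ∧ Root ps i ∧ a ∈ Stem ps i ∧ b ∈ Stem ps i := by
  obtain ⟨i, h1, h2, hA, g, hg, ha, hb⟩ := exists_layer_of_nEdge hPN ps hE
  exact ps.exists_root_mem_stem hPN h1 h2 hA hg ha hb

/-- If there is an edge in `N_S` between `a` and `b` in a pseudo-nilpotent finite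
semigroup, then there is a stem containing both `a` and `b`. -/
theorem stmt16 {S : Type*} [Semigroup S] [Finite S] [Nonempty S]
    (hPN : IsPN S) (ps : PrincipalSeries S) (a b : S) (hE : NEdge a b) :
    ∃ i, 1 ≤ i ∧ i ≤ ps.m ∧ Root ps i ∧ a ∈ Stem ps i ∧ b ∈ Stem ps i :=
  stmt16_general hPN ps a b hE
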